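/- In the scalar symmetric mixture of two logistic experts with x ∼ N(0,1), y ∈ {-1,1}, and parameters w, β ∈ ℝ, the missing-information quantity I_{z|x,y,θ} = E_{x,y}[ x²(1+y²) e^{x(w+yβ)}/(1+e^{x(w+yβ)})² ] is bounded above by 8( 1/(1+|w-β|)³ + 1/(1+|w+β|)³ ). -/

import Mathlib

open MeasureTheory ProbabilityTheory Real Set
open scoped ENNReal NNReal

lemma aux_integrableOn_Ioi (c : ℝ) (hc : 0 < c) :
    IntegrableOn (fun x : ℝ => x ^ 2 * Real.exp (-(c * |x|))) (Ioi 0) := by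
  have h := integrableOn_rpow_mul_exp_neg_mul_rpow (p := 1) (s := 2) (b := c)
    (by norm_num) one_pos hc
  refine h.congr_fun (fun x hx => ?_) measurableSet_Ioi
  rw [mem_Ioi] at hx
  dsimp only
  rw [Real.rpow_one, Real.rpow_two, abs_of_pos hx]
  ring_nf

lemma aux_integrable (c : ℝ) (hc : 0 < c) :
    Integrable (fun x : ℝ => x ^ 2 * Real.exp (-(c * |x|))) := by
  have hIci : IntegrableOn (fun x : ℝ => x ^ 2 * Real.exp (-(c * |x|))) (Ici 0) := by
    rw [integrableOn_Ici_iff_integrableOn_Ioi]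
    exact aux_integrableOn_Ioi c hc
  rw [← integrableOn_univ, ← Iic_union_Ici_of_le (le_refl (0:ℝ)), integrableOn_union]
  refine ⟨?_, hIci⟩
  have h_map_neg : ((volume : Measure ℝ).restrict (Ici 0)).map Neg.neg
      = (volume : Measure ℝ).restrict (Iic 0) := by
    conv => rhs; rw [← Measure.map_neg_eq_self (volume : Measure ℝ),
      measurableEmbedding_neg.restrict_map]
    simp
  rw [IntegrableOn, ← h_map_neg, measurableEmbedding_neg.integrable_map_iff]
  refine hIci.congr_fun (fun x _ => ?_) measurableSet_Ici
  simp [abs_neg]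

lemma aux_integral (c : ℝ) (hc : 0 < c) :
    ∫ x : ℝ, x ^ 2 * Real.exp (-(c * |x|)) = 4 / c ^ 3 := by
  have h : (fun x : ℝ => x ^ 2 * Real.exp (-(c * |x|)))
      = fun x => |x| ^ 2 * Real.exp (-(c * |x|)) := by
    funext x; rw [sq_abs]
  rw [h, integral_comp_abs (f := fun t : ℝ => t ^ 2 * Real.exp (-(c * t)))]
  have h2 := Real.integral_rpow_mul_exp_neg_mul_Ioi (a := 3) (r := c) (by norm_num) hc
  have h3 : ∫ t : ℝ in Ioi 0, t ^ 2 * Real.exp (-(c * t))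
      = ∫ t : ℝ in Ioi 0, t ^ ((3:ℝ) - 1) * Real.exp (-(c * t)) := by
    refine setIntegral_congr_fun measurableSet_Ioi (fun t _ => ?_)
    norm_num [Real.rpow_two]
  rw [h3, h2, Real.Gamma_ofNat_eq_factorial 2]
  rw [show ((1:ℝ)/c) ^ (3:ℝ) = (1/c) ^ (3:ℕ) by
    rw [← Real.rpow_natCast (1/c) 3]; norm_num]
  field_simp
  ring

lemma aux_logistic (t : ℝ) : Real.exp t / (1 + Real.exp t) ^ 2 ≤ Real.exp (-|t|) := by
  rcases le_or_gt 0 t with ht | ht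
  · rw [abs_of_nonneg ht]
    have h1 : Real.exp t ^ 2 ≤ (1 + Real.exp t) ^ 2 := by
      nlinarith [Real.exp_pos t]
    calc Real.exp t / (1 + Real.exp t) ^ 2 ≤ Real.exp t / Real.exp t ^ 2 :=
          div_le_div_of_nonneg_left (Real.exp_pos t).le (by positivity) h1
      _ = Real.exp (-t) := by
          rw [Real.exp_neg]; field_simp [sq]
  · rw [abs_of_neg ht, neg_neg]
    have h1 : (1:ℝ) ≤ (1 + Real.exp t) ^ 2 := by nlinarith [Real.exp_pos t]
    calc Real.exp t / (1 + Real.exp t) ^ 2 ≤ Real.exp t / 1 :=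
          div_le_div_of_nonneg_left (Real.exp_pos t).le one_pos h1
      _ = Real.exp t := div_one _

lemma aux_pdf_bound (x : ℝ) : gaussianPDFReal 0 1 x ≤ Real.exp (-|x|) := by
  have hsqrt : Real.exp (1/2) ≤ Real.sqrt (2 * π) := by
    have h1 : Real.exp 1 ≤ 2 * π := by
      have := Real.exp_one_lt_d9
      have := Real.pi_gt_d6
      linarith
    have h2 : Real.sqrt (Real.exp 1) = Real.exp (1/2) := by
      rw [show Real.exp 1 = Real.exp (1/2) * Real.exp (1/2) by
        rw [← Real.exp_add]; norm_num]
      exact Real.sqrt_mul_self (Real.exp_pos _).le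
    rw [← h2]
    exact Real.sqrt_le_sqrt h1
  have hs : (0:ℝ) < Real.sqrt (2 * π) := Real.sqrt_pos.mpr (by positivity)
  rw [gaussianPDFReal]
  simp only [NNReal.coe_one, mul_one, sub_zero]
  rw [inv_mul_le_iff₀ hs]
  calc Real.exp (-x ^ 2 / 2) ≤ Real.exp (1/2) * Real.exp (-|x|) := by
        rw [← Real.exp_add]
        apply Real.exp_le_exp.mpr
        nlinarith [sq_nonneg (|x| - 1), sq_abs x]
    _ ≤ Real.sqrt (2 * π) * Real.exp (-|x|) := by
        apply mul_le_mul_of_nonneg_right hsqrt (Real.exp_pos _).le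

/-- In the scalar SymMoLogE with `x ∼ N(0,1)`, `y ∈ {-1,1}` and parameters
`w, β ∈ ℝ`, the missing-information quantity
`I_{z|x,y,θ} = E_{x,y}[x²(1+y²) e^{x(w+yβ)}/(1+e^{x(w+yβ)})²]`
is bounded above by `8(1/(1+|w-β|)³ + 1/(1+|w+β|)³)`. -/
theorem scalar_symMoLogE_missing_information_bound
    (w β : ℝ) (py : ℝ → ℝ → ℝ)
    (hpy0 : ∀ x y, 0 ≤ py x y) (hpy1 : ∀ x y, py x y ≤ 1)
    (hpysum : ∀ x, py x 1 + py x (-1) = 1) :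
    (∫ x, ∑ y ∈ ({1, -1} : Finset ℝ), py x y *
        (x ^ 2 * (1 + y ^ 2) *
          (Real.exp (x * (w + y * β))
            / (1 + Real.exp (x * (w + y * β))) ^ 2)) ∂(gaussianReal 0 1))
      ≤ 8 * (1 / (1 + |w - β|) ^ 3 + 1 / (1 + |w + β|) ^ 3) := by
  set a := |w + β| with ha
  set b := |w - β| with hb
  have ha0 : 0 ≤ a := abs_nonneg _
  have hb0 : 0 ≤ b := abs_nonneg _
  set F : ℝ → ℝ := fun x => ∑ y ∈ ({1, -1} : Finset ℝ), py x y *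
      (x ^ 2 * (1 + y ^ 2) *
        (Real.exp (x * (w + y * β)) / (1 + Real.exp (x * (w + y * β))) ^ 2)) with hF
  set G : ℝ → ℝ := fun x =>
      2 * (x ^ 2 * Real.exp (-((1 + a) * |x|))) +
      2 * (x ^ 2 * Real.exp (-((1 + b) * |x|))) with hG
  have hmeas : Measurable (fun x => (gaussianPDFReal 0 1 x).toNNReal) :=
    (measurable_gaussianPDFReal 0 1).real_toNNReal
  have hγ : gaussianReal 0 1 = (volume : Measure ℝ).withDensity
      (fun x => ((gaussianPDFReal 0 1 x).toNNReal : ℝ≥0∞)) := by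
    rw [gaussianReal_of_var_ne_zero 0 one_ne_zero]; rfl
  rw [hγ, integral_withDensity_eq_integral_smul hmeas]
  have hFnn : ∀ x : ℝ, 0 ≤ F x := by
    intro x
    refine Finset.sum_nonneg (fun y _ => mul_nonneg (hpy0 x y) ?_)
    positivity
  have hnn : ∀ x : ℝ, 0 ≤ (gaussianPDFReal 0 1 x).toNNReal • F x := by
    intro x
    rw [NNReal.smul_def, smul_eq_mul]
    exact mul_nonneg (by positivity) (hFnn x)
  have hGint : Integrable G := by
    exact ((aux_integrable (1 + a) (by linarith)).const_mul 2).add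
      ((aux_integrable (1 + b) (by linarith)).const_mul 2)
  have hle : ∀ x : ℝ, (gaussianPDFReal 0 1 x).toNNReal • F x ≤ G x := by
    intro x
    rw [NNReal.smul_def, smul_eq_mul, Real.coe_toNNReal _ (gaussianPDFReal_nonneg 0 1 x)]
    have hpdf : gaussianPDFReal 0 1 x ≤ Real.exp (-|x|) := aux_pdf_bound x
    have hq1 : Real.exp (x * (w + 1 * β)) / (1 + Real.exp (x * (w + 1 * β))) ^ 2
        ≤ Real.exp (-(|x| * a)) := by
      rw [show x * (w + 1 * β) = x * (w + β) by ring, ha, ← abs_mul]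
      exact aux_logistic _
    have hq2 : Real.exp (x * (w + (-1) * β)) / (1 + Real.exp (x * (w + (-1) * β))) ^ 2
        ≤ Real.exp (-(|x| * b)) := by
      rw [show x * (w + (-1) * β) = x * (w - β) by ring, hb, ← abs_mul]
      exact aux_logistic _
    have hsum : F x = py x 1 * (x ^ 2 * (1 + (1:ℝ) ^ 2) *
          (Real.exp (x * (w + 1 * β)) / (1 + Real.exp (x * (w + 1 * β))) ^ 2))
        + py x (-1) * (x ^ 2 * (1 + (-1:ℝ) ^ 2) *
          (Real.exp (x * (w + (-1) * β)) / (1 + Real.exp (x * (w + (-1) * β))) ^ 2)) := by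
      rw [hF]
      exact Finset.sum_pair (by norm_num)
    have hT1nn : (0:ℝ) ≤ x ^ 2 * (1 + (1:ℝ) ^ 2) *
        (Real.exp (x * (w + 1 * β)) / (1 + Real.exp (x * (w + 1 * β))) ^ 2) := by positivity
    have hT2nn : (0:ℝ) ≤ x ^ 2 * (1 + (-1:ℝ) ^ 2) *
        (Real.exp (x * (w + (-1) * β)) / (1 + Real.exp (x * (w + (-1) * β))) ^ 2) := by
      positivity
    have hFx : F x ≤ 2 * x ^ 2 * Real.exp (-(|x| * a)) + 2 * x ^ 2 * Real.exp (-(|x| * b)) := by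
      rw [hsum]
      nlinarith [hpy0 x 1, hpy0 x (-1), hpy1 x 1, hpy1 x (-1), hq1, hq2, sq_nonneg x,
        Real.exp_pos (-(|x| * a)), Real.exp_pos (-(|x| * b)), hT1nn, hT2nn]
    calc gaussianPDFReal 0 1 x * F x
        ≤ Real.exp (-|x|) * (2 * x ^ 2 * Real.exp (-(|x| * a))
            + 2 * x ^ 2 * Real.exp (-(|x| * b))) :=
          mul_le_mul hpdf hFx (hFnn x) (Real.exp_pos _).le
      _ = G x := by
          rw [hG]
          have e1 : Real.exp (-|x|) * Real.exp (-(|x| * a)) = Real.exp (-((1 + a) * |x|)) := by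
            rw [← Real.exp_add]; congr 1; ring
          have e2 : Real.exp (-|x|) * Real.exp (-(|x| * b)) = Real.exp (-((1 + b) * |x|)) := by
            rw [← Real.exp_add]; congr 1; ring
          calc Real.exp (-|x|) * (2 * x ^ 2 * Real.exp (-(|x| * a))
                + 2 * x ^ 2 * Real.exp (-(|x| * b)))
              = 2 * (x ^ 2 * (Real.exp (-|x|) * Real.exp (-(|x| * a))))
                + 2 * (x ^ 2 * (Real.exp (-|x|) * Real.exp (-(|x| * b)))) := by ring
            _ = _ := by rw [e1, e2]
  refine le_trans (integral_mono_of_nonneg (ae_of_all _ hnn) hGint (ae_of_all _ hle)) ?_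
  rw [hG]
  rw [integral_add ((aux_integrable (1 + a) (by linarith)).const_mul 2)
    ((aux_integrable (1 + b) (by linarith)).const_mul 2),
    integral_const_mul, integral_const_mul, aux_integral (1 + a) (by linarith),
    aux_integral (1 + b) (by linarith)]
  rw [show 2 * (4 / (1 + a) ^ 3) + 2 * (4 / (1 + b) ^ 3)
      = 8 * (1 / (1 + b) ^ 3 + 1 / (1 + a) ^ 3) by ring]
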